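/- arXiv:1703.10374 — 2 statements merged into one kernel-verified Lean document; each statement's English description precedes it below -/
import Mathlib

section
/- A metrizable space (Y, π_Y) over B0 is an ANR_{B0}-space if and only if Y is an ANE_{B0}-space. -/
open Set Topology TopologicalSpace unitInterval

universe u

/-- `f` is a fiber preserving (f.p.) map from `(X, πX)` to `(Y, πY)` over `B0`. -/
def IsFPMap {B0 X Y : Type u} [TopologicalSpace B0] [TopologicalSpace X] [TopologicalSpace Y]
    (πX : X → B0) (πY : Y → B0) (f : X → Y) : Prop :=
  Continuous f ∧ ∀ x, πY (f x) = πX x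

/-- Two f.p. maps are f.p. homotopic (homotopic over `B0`). -/
def FPHomotopic {B0 X Y : Type u} [TopologicalSpace B0] [TopologicalSpace X] [TopologicalSpace Y]
    (πX : X → B0) (πY : Y → B0) (f g : X → Y) : Prop :=
  ∃ H : X × unitInterval → Y, Continuous H ∧
    (∀ x, H (x, 0) = f x) ∧ (∀ x, H (x, 1) = g x) ∧
    ∀ x t, πY (H (x, t)) = πX x

/-- A metrizable space `(Y, πY)` over `B0` is an absolute neighbourhood retract over `B0`:
for every closed f.p. embedding into a metrizable space over `B0` there is a neighbourhood of the
image and an f.p. retraction of that neighbourhood onto the image. -/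
def IsFiberANR (B0 : Type u) [TopologicalSpace B0] (Y : Type u) [TopologicalSpace Y]
    (πY : Y → B0) : Prop :=
  MetrizableSpace Y ∧ Continuous πY ∧
  ∀ (X : Type u) (_ : TopologicalSpace X), MetrizableSpace X →
    ∀ πX : X → B0, Continuous πX →
    ∀ i : Y → X, IsClosedEmbedding i → (∀ y, πX (i y) = πY y) →
    ∃ U : Set X, U ∈ nhdsSet (Set.range i) ∧
    ∃ r : U → X, Continuous r ∧ (∀ u : U, r u ∈ Set.range i) ∧
      (∀ u : U, πX (r u) = πX u) ∧ ∀ u : U, (u : X) ∈ Set.range i → r u = u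

/-- A metrizable space `(Y, πY)` over `B0` is an absolute neighbourhood extensor over `B0`. -/
def IsFiberANE (B0 : Type u) [TopologicalSpace B0] (Y : Type u) [TopologicalSpace Y]
    (πY : Y → B0) : Prop :=
  MetrizableSpace Y ∧ Continuous πY ∧
  ∀ (X : Type u) (_ : TopologicalSpace X), MetrizableSpace X →
    ∀ πX : X → B0, Continuous πX →
    ∀ A : Set X, IsClosed A →
    ∀ f : A → Y, Continuous f → (∀ a : A, πY (f a) = πX a) →
    ∃ U : Set X, U ∈ nhdsSet A ∧
    ∃ g : U → Y, Continuous g ∧ (∀ u : U, πY (g u) = πX u) ∧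
      ∀ (a : X) (ha : a ∈ A) (hu : a ∈ U), g ⟨a, hu⟩ = f ⟨a, ha⟩

/-- An open cover of a topological space. -/
def IsOpenCover {Y : Type u} [TopologicalSpace Y] (𝒰 : Set (Set Y)) : Prop :=
  (∀ V ∈ 𝒰, IsOpen V) ∧ ⋃₀ 𝒰 = Set.univ

/-- Two maps are `𝒰`-near. -/
def UNear {X Y : Type u} (𝒰 : Set (Set Y)) (f g : X → Y) : Prop :=
  ∀ x, ∃ V ∈ 𝒰, f x ∈ V ∧ g x ∈ V

/-- The (topological) weight of a space: the least cardinality of a basis of its topology. -/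
noncomputable def tweight (X : Type u) [TopologicalSpace X] : Cardinal.{u} :=
  sInf {c | ∃ B : Set (Set X), IsTopologicalBasis B ∧ Cardinal.mk B = c}

/-- An inverse system in `Top_{B0}`: a directed set of indices, spaces over `B0` and f.p.
bonding maps. -/
structure FibInvSys (B0 : Type u) [TopologicalSpace B0] : Type (u + 1) where
  Idx : Type u
  le : Idx → Idx → Prop
  le_refl : ∀ a, le a a
  le_trans : ∀ a b c, le a b → le b c → le a c
  directed : ∀ a b, ∃ c, le a c ∧ le b c
  obj : Idx → Type u
  topInst : ∀ a, TopologicalSpace (obj a)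
  proj : ∀ a, obj a → B0
  proj_cont : ∀ a, @Continuous _ _ (topInst a) _ (proj a)
  bond : ∀ a a', le a a' → obj a' → obj a
  bond_cont : ∀ a a' (h : le a a'), @Continuous _ _ (topInst a') (topInst a) (bond a a' h)
  bond_fp : ∀ a a' (h : le a a') (x : obj a'), proj a (bond a a' h x) = proj a' x
  bond_id : ∀ a (x : obj a), bond a a (le_refl a) x = x
  bond_comp : ∀ a a' a'' (h : le a a') (h' : le a' a'') (x : obj a''),
    bond a a' h (bond a' a'' h' x) = bond a a'' (le_trans a a' a'' h h') x

attribute [instance] FibInvSys.topInst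

/-- A morphism from a space `(X, πX)` over `B0` to an inverse system in `Top_{B0}`. -/
structure FibMapToSys {B0 : Type u} [TopologicalSpace B0] (X : Type u) [TopologicalSpace X]
    (πX : X → B0) (S : FibInvSys B0) where
  maps : ∀ a : S.Idx, X → S.obj a
  cont : ∀ a, Continuous (maps a)
  fp : ∀ a x, S.proj a (maps a x) = πX x
  comm : ∀ a a' (h : S.le a a') (x : X), S.bond a a' h (maps a' x) = maps a x

section Conditions

variable {B0 : Type u} [TopologicalSpace B0] (X : Type u) [TopologicalSpace X]
  (πX : X → B0) (S : FibInvSys B0)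

/-- Condition (R1) of a resolution over `B0`. -/
def CondR1 (p : FibMapToSys X πX S) : Prop :=
  ∀ (P : Type u) (_ : TopologicalSpace P) (πP : P → B0), IsFiberANR B0 P πP →
    ∀ 𝒰 : Set (Set P), IsOpenCover 𝒰 →
    ∀ h : X → P, IsFPMap πX πP h →
    ∃ (a : S.Idx) (f : S.obj a → P), IsFPMap (S.proj a) πP f ∧
      UNear 𝒰 h fun x => f (p.maps a x)

/-- Condition (R2) of a resolution over `B0`. -/
def CondR2 (p : FibMapToSys X πX S) : Prop :=
  ∀ (P : Type u) (_ : TopologicalSpace P) (πP : P → B0), IsFiberANR B0 P πP →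
    ∀ 𝒰 : Set (Set P), IsOpenCover 𝒰 →
    ∃ 𝒰' : Set (Set P), IsOpenCover 𝒰' ∧
      ∀ (a : S.Idx) (f f' : S.obj a → P), IsFPMap (S.proj a) πP f → IsFPMap (S.proj a) πP f' →
        UNear 𝒰' (fun x => f (p.maps a x)) (fun x => f' (p.maps a x)) →
        ∃ (a' : S.Idx) (h : S.le a a'),
          UNear 𝒰 (fun y => f (S.bond a a' h y)) fun y => f' (S.bond a a' h y)

/-- `p` is a resolution over `B0`. -/
def IsFibResolution (p : FibMapToSys X πX S) : Prop :=
  CondR1 X πX S p ∧ CondR2 X πX S p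

/-- Condition (E1) of an expansion over `B0`. -/
def CondE1 (p : FibMapToSys X πX S) : Prop :=
  ∀ (P : Type u) (_ : TopologicalSpace P) (πP : P → B0), IsFiberANR B0 P πP →
    ∀ f : X → P, IsFPMap πX πP f →
    ∃ (a : S.Idx) (h : S.obj a → P), IsFPMap (S.proj a) πP h ∧
      FPHomotopic πX πP (fun x => h (p.maps a x)) f

/-- Condition (E2) of an expansion over `B0`. -/
def CondE2 (p : FibMapToSys X πX S) : Prop :=
  ∀ (P : Type u) (_ : TopologicalSpace P) (πP : P → B0), IsFiberANR B0 P πP →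
    ∀ (a : S.Idx) (f f' : S.obj a → P), IsFPMap (S.proj a) πP f → IsFPMap (S.proj a) πP f' →
      FPHomotopic πX πP (fun x => f (p.maps a x)) (fun x => f' (p.maps a x)) →
      ∃ (a' : S.Idx) (h : S.le a a'),
        FPHomotopic (S.proj a') πP (fun y => f (S.bond a a' h y)) fun y => f' (S.bond a a' h y)

/-- Two f.p. homotopies `S, T : X × I → P` are f.p. homotopic rel `X × ∂I`. -/
def FPHomotopicRelEnds {P : Type u} [TopologicalSpace P] (πP : P → B0)
    (S T : X × unitInterval → P) : Prop :=
  ∃ G : (X × unitInterval) × unitInterval → P, Continuous G ∧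
    (∀ z, G (z, 0) = S z) ∧ (∀ z, G (z, 1) = T z) ∧
    (∀ z s, πP (G (z, s)) = πX z.1) ∧
    (∀ x s, G ((x, 0), s) = S (x, 0)) ∧ ∀ x s, G ((x, 1), s) = S (x, 1)

/-- Condition (SE2) of a strong expansion over `B0`. -/
def CondSE2 (p : FibMapToSys X πX S) : Prop :=
  ∀ (P : Type u) (_ : TopologicalSpace P) (πP : P → B0), IsFiberANR B0 P πP →
    ∀ (a : S.Idx) (f0 f1 : S.obj a → P), IsFPMap (S.proj a) πP f0 → IsFPMap (S.proj a) πP f1 →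
    ∀ Sh : X × unitInterval → P, Continuous Sh → (∀ x t, πP (Sh (x, t)) = πX x) →
      (∀ x, Sh (x, 0) = f0 (p.maps a x)) → (∀ x, Sh (x, 1) = f1 (p.maps a x)) →
      ∃ (a' : S.Idx) (h : S.le a a') (H : S.obj a' × unitInterval → P),
        Continuous H ∧ (∀ z t, πP (H (z, t)) = S.proj a' z) ∧
        (∀ z, H (z, 0) = f0 (S.bond a a' h z)) ∧
        (∀ z, H (z, 1) = f1 (S.bond a a' h z)) ∧
        FPHomotopicRelEnds X πX πP Sh fun zt => H (p.maps a' zt.1, zt.2)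

/-- `p` is a strong expansion over `B0`. -/
def IsFibStrongExpansion (p : FibMapToSys X πX S) : Prop :=
  CondE1 X πX S p ∧ CondSE2 X πX S p

end Conditions

/-!
ANE ⇒ ANR: extend the inverse of the embedding over a neighbourhood and compose with the
embedding. ANR ⇒ ANE: embed `Y` fibrewise as a closed subset of `B0 × C`, where `C` is the convex
hull of the Kuratowski–Wojdysławski image of `Y` in `Y →ᵇ ℝ`; the image is closed in `C` because a
convex combination `∑ wᵢ e(zᵢ)` exceeds `e(y)` at the point `y` by `∑ wᵢ d(zᵢ, y)`. By Dugundji's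
theorem f.p. maps from closed subsets of metric spaces into `B0 × C` extend, and composing such an
extension with a neighbourhood retraction onto `Y` extends f.p. maps into `Y`.
-/

open Metric Filter BoundedContinuousFunction

section Dugundji

variable {X E : Type*} [MetricSpace X] [NormedAddCommGroup E] [NormedSpace ℝ E] {A : Set X}

/-- Off `A` these sets admit local constant selections, and they shrink to `f a` as
`x → a ∈ A`. -/
def dugundjiHull (f : A → E) (x : X) : Set E :=
  convexHull ℝ (f '' {a | dist (a : X) x ≤ 2 * infDist x A})

theorem dugundjiHull_of_mem (f : A → E) {x : X} (hx : x ∈ A) :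
    dugundjiHull f x = {f ⟨x, hx⟩} := by
  have hnear : {a : A | dist (a : X) x ≤ 2 * infDist x A} = {⟨x, hx⟩} := by
    ext a
    simp [infDist_zero_of_mem hx, Subtype.ext_iff]
  rw [dugundjiHull, hnear, image_singleton, convexHull_singleton]

theorem exists_continuous_forall_mem_dugundjiHull (hA : IsClosed A) (hne : A.Nonempty)
    (f : A → E) : ∃ g : C(↥Aᶜ, E), ∀ z : ↥Aᶜ, g z ∈ dugundjiHull f z := by
  refine exists_continuous_forall_mem_convex_of_local_const (fun _ => convex_convexHull ℝ _)
    fun z => ?_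
  have hz : 0 < infDist (z : X) A := (hA.notMem_iff_infDist_pos hne).1 z.2
  obtain ⟨a, ha, hza⟩ :=
    (infDist_lt_iff hne).1 (by linarith : infDist (z : X) A < 2 * infDist (z : X) A)
  have hnear : ∀ᶠ y : ↥Aᶜ in 𝓝 z, dist a (y : X) < 2 * infDist (y : X) A :=
    ContinuousAt.eventually_lt (by fun_prop) (by fun_prop) (by rwa [dist_comm])
  exact ⟨f ⟨a, ha⟩,
    hnear.mono fun y hy => subset_convexHull ℝ _ ⟨⟨a, ha⟩, hy.le, rfl⟩⟩

theorem continuousAt_of_forall_mem_dugundjiHull {f : A → E} (hf : Continuous f) {F : X → E}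
    (hF : ∀ x, F x ∈ dugundjiHull f x) {x : X} (hx : x ∈ A) : ContinuousAt F x := by
  have hFx : F x = f ⟨x, hx⟩ := by simpa [dugundjiHull_of_mem f hx] using hF x
  rw [ContinuousAt, hFx, Metric.tendsto_nhds]
  intro ε hε
  obtain ⟨δ, hδ, hfδ⟩ := Metric.continuousAt_iff.1 hf.continuousAt ε hε
  filter_upwards [ball_mem_nhds x (by positivity : 0 < δ / 3)] with y hy
  refine convexHull_min ?_ (convex_ball _ _) (hF y)
  rintro _ ⟨a, ha, rfl⟩
  refine hfδ ?_
  have hyA : infDist y A ≤ dist y x := infDist_le_dist_of_mem hx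
  rw [mem_ball] at hy
  rw [Subtype.dist_eq]
  calc dist (a : X) x ≤ dist (a : X) y + dist y x := dist_triangle _ _ _
    _ < δ := by simp only [mem_ofPred_eq] at ha; linarith

/-- Dugundji's extension theorem. -/
theorem exists_continuous_extension_forall_mem_of_convex (hA : IsClosed A) (hne : A.Nonempty)
    {f : A → E} (hf : Continuous f) {K : Set E} (hK : Convex ℝ K) (hfK : ∀ a, f a ∈ K) :
    ∃ F : X → E, Continuous F ∧ (∀ a : A, F a = f a) ∧ ∀ x, F x ∈ K := by
  classical
  obtain ⟨g, hg⟩ := exists_continuous_forall_mem_dugundjiHull hA hne f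
  let F : X → E := fun x => if hx : x ∈ A then f ⟨x, hx⟩ else g ⟨x, hx⟩
  have hF : ∀ x, F x ∈ dugundjiHull f x := fun x => by
    by_cases hx : x ∈ A
    · simp [F, hx, dugundjiHull_of_mem f hx]
    · simpa [F, hx] using hg ⟨x, hx⟩
  have hFg : ContinuousOn F Aᶜ := by
    rw [continuousOn_iff_continuous_domRestrict]
    convert g.continuous using 1
    funext z
    exact dif_neg z.2
  refine ⟨F, continuous_iff_continuousAt.2 fun x => ?_, fun a => dif_pos a.2,
    fun x => convexHull_min ?_ hK (hF x)⟩
  · by_cases hx : x ∈ A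
    · exact continuousAt_of_forall_mem_dugundjiHull hf hF hx
    · exact hFg.continuousAt (hA.isOpen_compl.mem_nhds hx)
  · rintro _ ⟨a, -, rfl⟩
    exact hfK a

end Dugundji

section KuratowskiWojdyslawski

variable {Y : Type*} [MetricSpace Y]

def kuratowskiMap (y0 y : Y) : Y →ᵇ ℝ :=
  .ofNormedAddCommGroup (fun x => dist y x - dist y0 x) (by fun_prop) (dist y y0) fun x => by
    simpa only [Real.norm_eq_abs] using abs_dist_sub_le y y0 x

@[simp]
theorem kuratowskiMap_apply (y0 y x : Y) : kuratowskiMap y0 y x = dist y x - dist y0 x := rfl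

theorem isometry_kuratowskiMap (y0 : Y) : Isometry (kuratowskiMap y0) := by
  refine Isometry.of_dist_eq fun y1 y2 => le_antisymm ?_ ?_
  · refine (BoundedContinuousFunction.dist_le dist_nonneg).2 fun x => ?_
    simpa [Real.dist_eq] using abs_dist_sub_le y1 y2 x
  · simpa [Real.dist_eq] using
      BoundedContinuousFunction.dist_coe_le_dist (f := kuratowskiMap y0 y1)
        (g := kuratowskiMap y0 y2) y2

theorem exists_pos_mul_dist_le_of_mem_convexHull {y0 : Y} {g : Y →ᵇ ℝ}
    (hg : g ∈ convexHull ℝ (range (kuratowskiMap y0))) :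
    ∃ z, ∃ c > 0, ∀ y, c * dist z y ≤ g y + dist y0 y := by
  refine convexHull_min
    (t := {h : Y →ᵇ ℝ | ∃ z, ∃ c > 0, ∀ y, c * dist z y ≤ h y + dist y0 y}) ?_ ?_ hg
  · rintro _ ⟨z, rfl⟩
    exact ⟨z, 1, one_pos, fun y => by simp⟩
  · rintro h₁ ⟨z₁, c₁, hc₁, h₁z⟩ h₂ ⟨z₂, c₂, hc₂, h₂z⟩ a b ha hb hab
    have hcomb : ∀ y, (a • h₁ + b • h₂) y + dist y0 y
        = a * (h₁ y + dist y0 y) + b * (h₂ y + dist y0 y) := fun y => by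
      simp only [BoundedContinuousFunction.coe_add, BoundedContinuousFunction.coe_smul,
        Pi.add_apply, smul_eq_mul]
      linear_combination (dist y0 y) * hab.symm
    rcases ha.eq_or_lt with rfl | ha
    · refine ⟨z₂, b * c₂, by simp_all, fun y => ?_⟩
      rw [hcomb, mul_assoc]
      linarith [mul_le_mul_of_nonneg_left (h₂z y) hb]
    · refine ⟨z₁, a * c₁, by positivity, fun y => ?_⟩
      rw [hcomb, mul_assoc]
      linarith [mul_le_mul_of_nonneg_left (h₁z y) ha.le,
        mul_nonneg hb ((mul_nonneg hc₂.le dist_nonneg).trans (h₂z y))]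

theorem mem_range_kuratowskiMap_of_mem_convexHull_of_mem_closure {y0 : Y} {g : Y →ᵇ ℝ}
    (hg : g ∈ convexHull ℝ (range (kuratowskiMap y0)))
    (hgc : g ∈ closure (range (kuratowskiMap y0))) : g ∈ range (kuratowskiMap y0) := by
  obtain ⟨z, c, hc, hz⟩ := exists_pos_mul_dist_le_of_mem_convexHull hg
  obtain ⟨u, hu, hug⟩ := mem_closure_iff_seq_limit.1 hgc
  choose y hy using hu
  have hdist : ∀ n, dist (y n) z ≤ dist (u n) g / c := fun n => by
    rw [le_div_iff₀ hc, ← hy n, dist_comm (y n), dist_comm _ g, mul_comm]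
    calc c * dist z (y n) ≤ g (y n) - kuratowskiMap y0 (y n) (y n) := by simpa using hz (y n)
      _ ≤ dist g (kuratowskiMap y0 (y n)) :=
        (le_abs_self _).trans (by simpa [Real.dist_eq] using
          BoundedContinuousFunction.dist_coe_le_dist (f := g) (g := kuratowskiMap y0 (y n)) (y n))
  have hyz : Tendsto y atTop (𝓝 z) := tendsto_iff_dist_tendsto_zero.2 <|
    squeeze_zero (fun _ => dist_nonneg) hdist
      (by simpa using (tendsto_iff_dist_tendsto_zero.1 hug).div_const c)
  refine ⟨z,
    tendsto_nhds_unique (((isometry_kuratowskiMap y0).continuous.tendsto z).comp hyz) ?_⟩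
  simpa [Function.comp_def, hy] using hug

theorem isClosedEmbedding_codRestrict_kuratowskiMap (y0 : Y) :
    IsClosedEmbedding (codRestrict (kuratowskiMap y0) (convexHull ℝ (range (kuratowskiMap y0)))
      fun y => subset_convexHull ℝ _ (mem_range_self y)) := by
  refine ⟨(isometry_kuratowskiMap y0).isEmbedding.codRestrict _ _, isClosed_induced_iff.2
    ⟨closure (range (kuratowskiMap y0)), isClosed_closure, ?_⟩⟩
  ext g
  refine ⟨fun hgc => ?_, fun ⟨y, hy⟩ => subset_closure ⟨y, congrArg Subtype.val hy⟩⟩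
  obtain ⟨y, hy⟩ := mem_range_kuratowskiMap_of_mem_convexHull_of_mem_closure g.2 hgc
  exact ⟨y, Subtype.ext hy⟩

end KuratowskiWojdyslawski

theorem Topology.IsClosedEmbedding.prodMk_of_continuous {X Y Z : Type*} [TopologicalSpace X]
    [TopologicalSpace Y] [TopologicalSpace Z] [T2Space Y] [T2Space Z] {f : X → Y} {g : X → Z}
    (hf : Continuous f) (hg : IsClosedEmbedding g) : IsClosedEmbedding fun x => (f x, g x) := by
  have hp : IsProperMap fun x => (f x, g x) :=
    isProperMap_of_comp_of_t2 (hf.prodMk hg.continuous) continuous_snd hg.isProperMap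
  exact .of_continuous_injective_isClosedMap hp.continuous
    (fun x y h => hg.injective (congrArg Prod.snd h)) hp.isClosedMap

namespace IsFiberANR

variable {B0 Y Z : Type u} [TopologicalSpace B0] [TopologicalSpace Y] [TopologicalSpace Z]
  [MetrizableSpace Z] {πY : Y → B0} {πZ : Z → B0} {i : Y → Z}

theorem exists_nhdsSet_leftInverse (hY : IsFiberANR B0 Y πY) (hπZ : Continuous πZ)
    (hi : IsClosedEmbedding i) (hiπ : ∀ y, πZ (i y) = πY y) :
    ∃ V ∈ 𝓝ˢ (range i), ∃ ρ : V → Y, Continuous ρ ∧ (∀ v, πY (ρ v) = πZ v) ∧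
      ∀ y (hy : i y ∈ V), ρ ⟨i y, hy⟩ = y := by
  obtain ⟨V, hV, r, hr, hri, hrπ, hrid⟩ := hY.2.2 Z _ ‹_› πZ hπZ i hi hiπ
  let ρ : V → Y := fun v => hi.isEmbedding.toHomeomorph.symm ⟨r v, hri v⟩
  have hiρ : ∀ v, i (ρ v) = r v := fun v =>
    congrArg Subtype.val (hi.isEmbedding.toHomeomorph.apply_symm_apply _)
  refine ⟨V, hV, ρ, hi.isEmbedding.toHomeomorph.symm.continuous.comp (hr.subtype_mk hri),
    fun v => by rw [← hiπ, hiρ, hrπ], fun y hy => hi.injective ?_⟩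
  rw [hiρ, hrid _ (mem_range_self y)]

theorem exists_nhdsSet_extension (hY : IsFiberANR B0 Y πY) (hπZ : Continuous πZ)
    (hi : IsClosedEmbedding i) (hiπ : ∀ y, πZ (i y) = πY y) {X : Type u} [TopologicalSpace X]
    {πX : X → B0} {A : Set X} (f : A → Y) {Ψ : X → Z} (hΨ : Continuous Ψ)
    (hΨπ : ∀ x, πZ (Ψ x) = πX x) (hΨA : ∀ a : A, Ψ a = i (f a)) :
    ∃ U ∈ 𝓝ˢ A, ∃ g : U → Y, Continuous g ∧ (∀ u : U, πY (g u) = πX u) ∧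
      ∀ (a : X) (ha : a ∈ A) (hu : a ∈ U), g ⟨a, hu⟩ = f ⟨a, ha⟩ := by
  obtain ⟨V, hV, ρ, hρ, hρπ, hρi⟩ := hY.exists_nhdsSet_leftInverse hπZ hi hiπ
  refine ⟨Ψ ⁻¹' V,
    hΨ.tendsto_nhdsSet (t := range i) (fun a ha => ⟨_, (hΨA ⟨a, ha⟩).symm⟩) hV,
    fun u => ρ ⟨Ψ u, u.2⟩, hρ.comp ((hΨ.comp continuous_subtype_val).subtype_mk _),
    fun u => (hρπ _).trans (hΨπ u), fun a ha hu => ?_⟩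
  have hiV : i (f ⟨a, ha⟩) ∈ V := hΨA ⟨a, ha⟩ ▸ hu
  calc ρ ⟨Ψ a, hu⟩
      = ρ ⟨i (f ⟨a, ha⟩), hiV⟩ := congrArg ρ (Subtype.ext (hΨA ⟨a, ha⟩))
    _ = f ⟨a, ha⟩ := hρi _ hiV

theorem isFiberANE [MetrizableSpace B0] (hY : IsFiberANR B0 Y πY) : IsFiberANE B0 Y πY := by
  refine ⟨hY.1, hY.2.1, fun X _ _ πX hπX A hA f hf hfπ => ?_⟩
  rcases A.eq_empty_or_nonempty with rfl | hne
  · exact ⟨∅, by simp, isEmptyElim, continuous_of_discreteTopology, isEmptyElim,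
      fun _ ha => ha.elim⟩
  have := hY.1
  let := metrizableSpaceMetric X
  let := metrizableSpaceMetric Y
  obtain ⟨y0⟩ : Nonempty Y := ⟨f ⟨_, hne.some_mem⟩⟩
  obtain ⟨F, hF, hFf, hFC⟩ := exists_continuous_extension_forall_mem_of_convex hA hne
    ((isometry_kuratowskiMap y0).continuous.comp hf) (convex_convexHull ℝ _)
    fun a => subset_convexHull ℝ _ (mem_range_self (f a))
  exact hY.exists_nhdsSet_extension continuous_fst
    ((isClosedEmbedding_codRestrict_kuratowskiMap y0).prodMk_of_continuous hY.2.1)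
    (fun _ => rfl) f (Ψ := fun x => (πX x, ⟨F x, hFC x⟩)) (hπX.prodMk (hF.subtype_mk hFC))
    (fun _ => rfl) fun a => Prod.ext (hfπ a).symm (Subtype.ext (hFf a))

end IsFiberANR

theorem IsFiberANE.isFiberANR {B0 Y : Type u} [TopologicalSpace B0] [TopologicalSpace Y]
    {πY : Y → B0} (hY : IsFiberANE B0 Y πY) : IsFiberANR B0 Y πY := by
  refine ⟨hY.1, hY.2.1, fun X _ _ πX hπX i hi hiπ => ?_⟩
  let φ : range i → Y := hi.isEmbedding.toHomeomorph.symm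
  have hiφ : ∀ z, i (φ z) = z := fun z =>
    congrArg Subtype.val (hi.isEmbedding.toHomeomorph.apply_symm_apply z)
  obtain ⟨U, hU, g, hg, hgπ, hgφ⟩ := hY.2.2 X _ ‹_› πX hπX _ hi.isClosed_range φ
    hi.isEmbedding.toHomeomorph.symm.continuous fun z => by rw [← hiπ, hiφ]
  refine ⟨U, hU, i ∘ g, hi.continuous.comp hg, fun u => mem_range_self _,
    fun u => by rw [Function.comp_apply, hiπ, hgπ], fun u hu => ?_⟩
  rw [Function.comp_apply, hgφ u hu u.2, hiφ]

theorem fiberANR_iff_fiberANE_general (B0 : Type u) [TopologicalSpace B0] [MetrizableSpace B0]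
    (Y : Type u) [TopologicalSpace Y] (πY : Y → B0) :
    IsFiberANR B0 Y πY ↔ IsFiberANE B0 Y πY :=
  ⟨IsFiberANR.isFiberANE, IsFiberANE.isFiberANR⟩

/-- Proposition 0.1: a metrizable space `Y` over `B0` is an `ANR_{B0}`-space iff it is an
`ANE_{B0}`-space. -/
theorem fiberANR_iff_fiberANE (B0 : Type u) [TopologicalSpace B0] [MetrizableSpace B0]
    (Y : Type u) [TopologicalSpace Y] [MetrizableSpace Y] (πY : Y → B0) (hπY : Continuous πY) :
    IsFiberANR B0 Y πY ↔ IsFiberANE B0 Y πY :=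
  fiberANR_iff_fiberANE_general B0 Y πY
end

section
/- Let (Y, π_Y) be an ANR_{B0}-space. Then every open cover 𝒰 of Y admits an open cover 𝒱 of Y such that whenever two f.p. maps f, g : (X, π_X) → (Y, π_Y) from an arbitrary space (X, π_X) over B0 are 𝒱-near, there exists an f.p. 𝒰-homotopy H : X × I → Y from f to g; moreover, if f and g agree on a subset A ⊆ X, then H can be chosen to be an f.p. homotopy rel A. -/
open Set Topology TopologicalSpace unitInterval

universe u

/-!
Embed `Y` fibrewise into `B0 × C` by `y ↦ (πY y, κ y)`, where `κ` is the Kuratowski embedding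
into bounded continuous functions on `Y` and `C` is the convex hull of its image. By the
Kuratowski–Wojdysławski argument `κ(Y)` is closed in `C`, so the `ANR_{B0}` property gives a
fibre preserving retraction `ρ` of a neighbourhood of the image. Choose `𝒱` so that around each
`y` a product of an open set of `B0` with a ball about `κ y` is sent by `ρ` into one member of `𝒰`.
For `𝒱`-near `f` and `g` the segments from `κ (f x)` to `κ (g x)`, paired with `πX x`, stay in
such a product; composing with `ρ` gives the homotopy, which is constant wherever `f = g`.
-/

open scoped BoundedContinuousFunction

section Kuratowski

variable {Y : Type*} [PseudoMetricSpace Y]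

noncomputable def kuratowskiBCF (y₀ y : Y) : Y →ᵇ ℝ :=
  .ofNormedAddCommGroup (fun z => dist z y - dist z y₀) (by fun_prop) (dist y y₀) fun z => by
    simpa only [dist_eq_norm] using dist_dist_dist_le_right z y y₀

@[simp]
lemma kuratowskiBCF_apply (y₀ y z : Y) : kuratowskiBCF y₀ y z = dist z y - dist z y₀ :=
  rfl

lemma isometry_kuratowskiBCF (y₀ : Y) : Isometry (kuratowskiBCF y₀) := by
  refine Isometry.of_dist_eq fun a b => le_antisymm ?_ ?_
  · refine (BoundedContinuousFunction.dist_le dist_nonneg).2 fun z => ?_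
    simpa only [Real.dist_eq, kuratowskiBCF_apply, sub_sub_sub_cancel_right]
      using dist_dist_dist_le_right z a b
  · simpa [Real.dist_eq] using BoundedContinuousFunction.dist_coe_le_dist
      (f := kuratowskiBCF y₀ a) (g := kuratowskiBCF y₀ b) a

lemma exists_dist_le_two_mul_of_mem_convexHull {y₀ : Y} {s : Set (Y →ᵇ ℝ)}
    (hs : s ⊆ range (kuratowskiBCF y₀)) {v : Y →ᵇ ℝ} (hv : v ∈ convexHull ℝ s) (y : Y) :
    ∃ p ∈ s, dist v p ≤ 2 * dist v (kuratowskiBCF y₀ y) := by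
  -- Evaluation at `y` is linear, so some vertex `p = kuratowskiBCF y₀ u` of the hull has
  -- `p y ≤ v y`, which unfolds to `dist y u ≤ dist v (kuratowskiBCF y₀ y)`.
  obtain ⟨p, hp, hpv⟩ := ((BoundedContinuousFunction.evalCLM ℝ y).toLinearMap.concaveOn
    convex_univ).exists_le_of_mem_convexHull (subset_univ s) hv
  obtain ⟨u, rfl⟩ := hs hp
  have hvy : v y - kuratowskiBCF y₀ y y ≤ dist v (kuratowskiBCF y₀ y) :=
    (le_abs_self _).trans (Real.dist_eq (v y) _ ▸ BoundedContinuousFunction.dist_coe_le_dist y)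
  simp only [ContinuousLinearMap.coe_coe, BoundedContinuousFunction.evalCLM_apply,
    kuratowskiBCF_apply, dist_self] at hpv hvy
  refine ⟨_, hp, ?_⟩
  calc dist v (kuratowskiBCF y₀ u)
      ≤ dist v (kuratowskiBCF y₀ y) + dist (kuratowskiBCF y₀ y) (kuratowskiBCF y₀ u) :=
        dist_triangle _ _ _
    _ ≤ 2 * dist v (kuratowskiBCF y₀ y) := by
        rw [(isometry_kuratowskiBCF y₀).dist_eq]; linarith

lemma mem_range_kuratowskiBCF_of_mem_convexHull_of_mem_closure {y₀ : Y} {v : Y →ᵇ ℝ}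
    (hconv : v ∈ convexHull ℝ (range (kuratowskiBCF y₀)))
    (hcl : v ∈ closure (range (kuratowskiBCF y₀))) : v ∈ range (kuratowskiBCF y₀) := by
  classical
  rw [convexHull_eq_union_convexHull_finite_subsets, mem_iUnion₂] at hconv
  obtain ⟨F, hF, hvF⟩ := hconv
  suffices v ∈ closure (F : Set (Y →ᵇ ℝ)) from hF (F.isClosed.closure_eq ▸ this)
  refine Metric.mem_closure_iff.2 fun ε hε => ?_
  obtain ⟨_, ⟨y, rfl⟩, hy⟩ := Metric.mem_closure_iff.1 hcl (ε / 2) (half_pos hε)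
  obtain ⟨p, hp, hvp⟩ := exists_dist_le_two_mul_of_mem_convexHull hF hvF y
  exact ⟨p, hp, by linarith⟩

end Kuratowski

theorem exists_isClosedEmbedding_convex (Y : Type u) [MetricSpace Y] :
    ∃ C : Set (Y →ᵇ ℝ), Convex ℝ C ∧ ∃ e : Y → C, IsClosedEmbedding e := by
  rcases isEmpty_or_nonempty Y with hY | ⟨⟨y₀⟩⟩
  · exact ⟨∅, convex_empty, isEmptyElim, .of_subsingleton _, by simp [range_eq_empty]⟩
  set e := kuratowskiBCF y₀
  have he : ∀ y, e y ∈ convexHull ℝ (range e) := fun y => subset_convexHull ℝ _ ⟨y, rfl⟩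
  have hiso : Isometry fun y => (⟨e y, he y⟩ : convexHull ℝ (range e)) :=
    Isometry.of_dist_eq fun a b => (isometry_kuratowskiBCF y₀).dist_eq a b
  refine ⟨_, convex_convexHull ℝ _, _, hiso.isEmbedding,
    isClosed_of_closure_subset fun w hw => ?_⟩
  have hwe : (w : Y →ᵇ ℝ) ∈ closure (range e) :=
    map_mem_closure continuous_subtype_val hw (by rintro _ ⟨y, rfl⟩; exact ⟨y, rfl⟩)
  obtain ⟨y, hy⟩ := mem_range_kuratowskiBCF_of_mem_convexHull_of_mem_closure w.2 hwe
  exact ⟨y, Subtype.ext hy⟩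

lemma Continuous.isClosedEmbedding_prodMk {X Y W : Type*} [TopologicalSpace X]
    [TopologicalSpace Y] [TopologicalSpace W] [T2Space X] {f : Y → X} (hf : Continuous f)
    {g : Y → W} (hg : IsClosedEmbedding g) : IsClosedEmbedding fun y => (f y, g y) := by
  refine ⟨.of_comp (hf.prodMk hg.continuous) continuous_snd hg.isEmbedding, ?_⟩
  have hrange : range (fun y => (f y, g y)) = Prod.map id g '' {p : X × Y | p.1 = f p.2} := by
    ext
    simp [eq_comm]
  rw [hrange]
  exact (IsClosedEmbedding.id.prodMap hg).isClosedMap _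
    (isClosed_eq continuous_fst (hf.comp continuous_snd))

lemma IsFiberANR.exists_retraction {B0 Y Z : Type u} [TopologicalSpace B0] [TopologicalSpace Y]
    [TopologicalSpace Z] [MetrizableSpace Z] {πY : Y → B0} (hY : IsFiberANR B0 Y πY)
    {πZ : Z → B0} (hπZ : Continuous πZ) {i : Y → Z} (hi : IsClosedEmbedding i)
    (hπi : ∀ y, πZ (i y) = πY y) :
    ∃ U ∈ 𝓝ˢ (range i), ∃ ρ : U → Y, Continuous ρ ∧ (∀ y (h : i y ∈ U), ρ ⟨i y, h⟩ = y) ∧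
      ∀ z, πY (ρ z) = πZ z := by
  obtain ⟨U, hU, r, hr, hr_mem, hr_π, hr_id⟩ := hY.2.2 Z _ ‹_› πZ hπZ i hi hπi
  let ρ : U → Y := fun z => hi.isEmbedding.toHomeomorph.symm ⟨r z, hr_mem z⟩
  have hiρ : ∀ z, i (ρ z) = r z := fun z =>
    congrArg Subtype.val (hi.isEmbedding.toHomeomorph.apply_symm_apply ⟨r z, hr_mem z⟩)
  refine ⟨U, hU, ρ, by fun_prop, fun y h => hi.injective ?_, fun z => ?_⟩
  · rw [hiρ]
    exact hr_id _ ⟨y, rfl⟩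
  · rw [← hπi, hiρ, hr_π]

section ConvexSegment

variable {E : Type*} [NormedAddCommGroup E] [NormedSpace ℝ E] {C : Set E}

noncomputable def Convex.lineMap (hC : Convex ℝ C) (a b : C) (t : I) : C :=
  ⟨AffineMap.lineMap (a : E) b (t : ℝ), hC.lineMap_mem a.2 b.2 t.2⟩

variable (hC : Convex ℝ C)

@[simp] lemma Convex.lineMap_zero (a b : C) : hC.lineMap a b 0 = a :=
  Subtype.ext (AffineMap.lineMap_apply_zero _ _)

@[simp] lemma Convex.lineMap_one (a b : C) : hC.lineMap a b 1 = b :=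
  Subtype.ext (AffineMap.lineMap_apply_one _ _)

@[simp] lemma Convex.lineMap_self (a : C) (t : I) : hC.lineMap a a t = a :=
  Subtype.ext (AffineMap.lineMap_same_apply _ _)

lemma Convex.lineMap_mem_ball {a b c : C} {ε : ℝ} (ha : a ∈ Metric.ball c ε)
    (hb : b ∈ Metric.ball c ε) (t : I) : hC.lineMap a b t ∈ Metric.ball c ε :=
  (convex_ball (c : E) ε).lineMap_mem ha hb t.2

lemma Convex.continuous_lineMap {X : Type*} [TopologicalSpace X] {a b : X → C} {t : X → I}
    (ha : Continuous a) (hb : Continuous b) (ht : Continuous t) :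
    Continuous fun x => hC.lineMap (a x) (b x) (t x) := by
  refine Continuous.subtype_mk ?_ _
  simp only [AffineMap.lineMap_apply_module]
  fun_prop

end ConvexSegment

lemma exists_isOpen_prod_ball_subset {B0 C Y : Type*} [TopologicalSpace B0] [PseudoMetricSpace C]
    [TopologicalSpace Y] {U : Set (B0 × C)} {ρ : U → Y} (hρ : Continuous ρ) {b : B0} {c : C}
    (hU : U ∈ 𝓝 (b, c)) {W : Set Y} (hW : IsOpen W) (hρW : ρ ⟨(b, c), mem_of_mem_nhds hU⟩ ∈ W) :
    ∃ P : Set B0, IsOpen P ∧ b ∈ P ∧ ∃ ε > 0,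
      ∀ z ∈ P ×ˢ Metric.ball c ε, ∃ h : z ∈ U, ρ ⟨z, h⟩ ∈ W := by
  have hN : Subtype.val '' (ρ ⁻¹' W) ∈ 𝓝 (b, c) := by
    have := hρ.continuousAt.preimage_mem_nhds (hW.mem_nhds hρW)
    rwa [mem_nhds_subtype_iff_nhdsWithin, nhdsWithin_eq_nhds.2 hU] at this
  obtain ⟨P, Q, hP, hbP, hQ, hcQ, hPQ⟩ := mem_nhds_prod_iff'.1 hN
  obtain ⟨ε, hε, hεQ⟩ := Metric.isOpen_iff.1 hQ c hcQ
  refine ⟨P, hP, hbP, ε, hε, fun z hz => ?_⟩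
  obtain ⟨⟨_, h⟩, hzW, rfl⟩ := hPQ (prod_mono subset_rfl hεQ hz)
  exact ⟨h, hzW⟩

def IsFPCoverHomotopyRel {B0 X Y : Type*} [TopologicalSpace X] [TopologicalSpace Y]
    (πX : X → B0) (πY : Y → B0) (𝒰 : Set (Set Y)) (A : Set X) (f g : X → Y)
    (H : X × I → Y) : Prop :=
  Continuous H ∧ (∀ x, H (x, 0) = f x) ∧ (∀ x, H (x, 1) = g x) ∧
    (∀ x t, πY (H (x, t)) = πX x) ∧ (∀ x, ∃ V ∈ 𝒰, ∀ t, H (x, t) ∈ V) ∧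
    ∀ a ∈ A, ∀ t, H (a, t) = f a

section RetractionHomotopy

variable {B0 Y : Type u} [TopologicalSpace B0] [TopologicalSpace Y] {πY : Y → B0}
  {E : Type*} [NormedAddCommGroup E] [NormedSpace ℝ E] {C : Set E} {e : Y → C}
  {U : Set (B0 × C)} {ρ : U → Y}

lemma isFPCoverHomotopyRel_of_segments_mem (hC : Convex ℝ C) (he : Continuous e)
    (hρ : Continuous ρ) (hρi : ∀ y h, ρ ⟨(πY y, e y), h⟩ = y) (hρπ : ∀ z, πY (ρ z) = (z : B0 × C).1)
    {X : Type u} [TopologicalSpace X] {πX : X → B0} (hπX : Continuous πX) {f g : X → Y}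
    (hf : IsFPMap πX πY f) (hg : IsFPMap πX πY g) {A : Set X} (hA : ∀ a ∈ A, f a = g a)
    {𝒰 : Set (Set Y)} (hσU : ∀ x t, (πX x, hC.lineMap (e (f x)) (e (g x)) t) ∈ U)
    (hσ𝒰 : ∀ x, ∃ V ∈ 𝒰, ∀ t, ρ ⟨_, hσU x t⟩ ∈ V) :
    IsFPCoverHomotopyRel πX πY 𝒰 A f g fun p => ρ ⟨_, hσU p.1 p.2⟩ := by
  have hρ_of_eq : ∀ {z} (h : z ∈ U) (y : Y), z = (πY y, e y) → ρ ⟨z, h⟩ = y := by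
    rintro _ h y rfl
    exact hρi y h
  refine ⟨?_, fun x => hρ_of_eq _ _ ?_, fun x => hρ_of_eq _ _ ?_, fun x t => hρπ _, hσ𝒰,
    fun a ha t => hρ_of_eq _ _ ?_⟩
  · refine hρ.comp (Continuous.subtype_mk ?_ _)
    exact (hπX.comp continuous_fst).prodMk (hC.continuous_lineMap
      (he.comp (hf.1.comp continuous_fst)) (he.comp (hg.1.comp continuous_fst)) continuous_snd)
  · simp [hf.2 x]
  · simp [hg.2 x]
  · simp [← hA a ha, hf.2 a]

theorem exists_openCover_isFPCoverHomotopyRel_of_retraction (hC : Convex ℝ C)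
    (hπY : Continuous πY) (he : Continuous e) (hU : U ∈ 𝓝ˢ (range fun y => (πY y, e y)))
    (hρ : Continuous ρ) (hρi : ∀ y h, ρ ⟨(πY y, e y), h⟩ = y) (hρπ : ∀ z, πY (ρ z) = (z : B0 × C).1)
    {𝒰 : Set (Set Y)} (h𝒰 : IsOpenCover 𝒰) :
    ∃ 𝒱 : Set (Set Y), IsOpenCover 𝒱 ∧
      ∀ (X : Type u) (_ : TopologicalSpace X) (πX : X → B0), Continuous πX →
        ∀ f g : X → Y, IsFPMap πX πY f → IsFPMap πX πY g → UNear 𝒱 f g →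
        ∀ A : Set X, (∀ a ∈ A, f a = g a) → ∃ H, IsFPCoverHomotopyRel πX πY 𝒰 A f g H := by
  have hlocal : ∀ y, ∃ V ∈ 𝒰, ∃ P : Set B0, IsOpen P ∧ πY y ∈ P ∧ ∃ ε > 0,
      ∀ z ∈ P ×ˢ Metric.ball (e y) ε, ∃ h : z ∈ U, ρ ⟨z, h⟩ ∈ V := fun y => by
    have hUy : U ∈ 𝓝 (πY y, e y) := mem_nhdsSet_iff_forall.1 hU _ ⟨y, rfl⟩
    obtain ⟨V, hV, hyV⟩ := mem_sUnion.1 (h𝒰.2 ▸ mem_univ y)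
    exact ⟨V, hV, exists_isOpen_prod_ball_subset hρ hUy (h𝒰.1 V hV) (by rwa [hρi])⟩
  choose V hV P hP hyP ε hε hPε using hlocal
  refine ⟨range fun y => πY ⁻¹' P y ∩ e ⁻¹' Metric.ball (e y) (ε y), ⟨?_, ?_⟩, ?_⟩
  · rintro _ ⟨y, rfl⟩
    exact ((hP y).preimage hπY).inter (Metric.isOpen_ball.preimage he)
  · exact eq_univ_of_forall fun y =>
      mem_sUnion.2 ⟨_, ⟨y, rfl⟩, hyP y, Metric.mem_ball_self (hε y)⟩
  · rintro X _ πX hπX f g hf hg hfg A hA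
    have hnear : ∀ x, ∃ y, f x ∈ πY ⁻¹' P y ∩ e ⁻¹' Metric.ball (e y) (ε y) ∧
        g x ∈ πY ⁻¹' P y ∩ e ⁻¹' Metric.ball (e y) (ε y) := fun x => by
      obtain ⟨_, ⟨y, rfl⟩, hfx, hgx⟩ := hfg x
      exact ⟨y, hfx, hgx⟩
    choose y hfy hgy using hnear
    have hσ : ∀ x t, (πX x, hC.lineMap (e (f x)) (e (g x)) t) ∈
        P (y x) ×ˢ Metric.ball (e (y x)) (ε (y x)) := fun x t =>
      ⟨hf.2 x ▸ (hfy x).1, hC.lineMap_mem_ball (hfy x).2 (hgy x).2 t⟩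
    exact ⟨_, isFPCoverHomotopyRel_of_segments_mem hC he hρ hρi hρπ hπX hf hg hA
      (fun x t => (hPε _ _ (hσ x t)).1) fun x => ⟨V (y x), hV _, fun t => (hPε _ _ (hσ x t)).2⟩⟩

end RetractionHomotopy

/-- Proposition 0.3: for an `ANR_{B0}`-space `Y` every open cover `𝒰` admits an open cover `𝒱`
such that any two `𝒱`-near f.p. maps into `Y` are connected by an f.p. `𝒰`-homotopy, which may
moreover be chosen rel any subset on which the two maps agree. -/
theorem fiberANR_near_implies_cover_homotopy (B0 : Type u) [TopologicalSpace B0]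
    [MetrizableSpace B0] (Y : Type u) [TopologicalSpace Y] (πY : Y → B0)
    (hY : IsFiberANR B0 Y πY) (𝒰 : Set (Set Y)) (h𝒰 : IsOpenCover 𝒰) :
    ∃ 𝒱 : Set (Set Y), IsOpenCover 𝒱 ∧
      ∀ (X : Type u) (_ : TopologicalSpace X) (πX : X → B0), Continuous πX →
        ∀ f g : X → Y, IsFPMap πX πY f → IsFPMap πX πY g → UNear 𝒱 f g →
        ∀ A : Set X, (∀ a ∈ A, f a = g a) →
        ∃ H : X × unitInterval → Y, Continuous H ∧
          (∀ x, H (x, 0) = f x) ∧ (∀ x, H (x, 1) = g x) ∧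
          (∀ x t, πY (H (x, t)) = πX x) ∧
          (∀ x, ∃ V ∈ 𝒰, ∀ t, H (x, t) ∈ V) ∧
          ∀ a ∈ A, ∀ t, H (a, t) = f a := by
  have : MetrizableSpace Y := hY.1
  let := metrizableSpaceMetric Y
  obtain ⟨C, hC, e, he⟩ := exists_isClosedEmbedding_convex Y
  obtain ⟨U, hU, ρ, hρ, hρi, hρπ⟩ :=
    hY.exists_retraction continuous_fst (hY.2.1.isClosedEmbedding_prodMk he) fun _ => rfl
  exact exists_openCover_isFPCoverHomotopyRel_of_retraction hC hY.2.1 he.continuous hU hρ hρi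
    hρπ h𝒰
end
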